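/- arXiv:1407.6154 — 7 statements merged into one kernel-verified Lean document; each statement's English description precedes it below -/
import Mathlib

section
/- Let F ≥ 2 be a natural number and let γ be a real number with γ ≥ 2 + 1/√(F+1). Define a sequence (n_b) by n_1 = F + 1 and n_{b+1} = n_b + ⌈γ √(n_b)⌉. Then for every b ≥ 1, b ≤ √(n_b). -/
/-! The invariant `b ≤ √n_b` propagates because `(b + 1)² ≤ n_b + 2√n_b + 1`, and the increment
`⌈γ √n_b⌉` is at least `2√n_b + 1` as soon as `(γ - 2) √n_b ≥ 1`; the latter holds for every `b`
since the sequence is nondecreasing, so `√n_b ≥ √(F + 1)`. -/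

open Real

lemma add_one_le_sqrt_add_ceil {x t γ : ℝ} (hx : 0 ≤ x) (ht : 0 ≤ t) (htx : t ≤ √x)
    (hγ : 1 ≤ (γ - 2) * √x) : t + 1 ≤ √(x + ⌈γ * √x⌉₊) := by
  have hsq : √x ^ 2 = x := sq_sqrt hx
  apply le_sqrt_of_sq_le
  calc (t + 1) ^ 2 ≤ √x ^ 2 + 2 * √x + 1 := by nlinarith
    _ ≤ x + γ * √x := by nlinarith
    _ ≤ x + ⌈γ * √x⌉₊ := by gcongr; exact Nat.le_ceil _

lemma apply_le_apply_of_succ_eq_add {n : ℕ → ℕ} {f : ℕ → ℕ} {b₀ : ℕ}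
    (hrec : ∀ b ≥ b₀, n (b + 1) = n b + f b) {b : ℕ} (hb : b₀ ≤ b) : n b₀ ≤ n b := by
  induction b, hb using Nat.le_induction with
  | base => rfl
  | succ b hb ih => rw [hrec b hb]; omega

theorem stmt_0_general (F : ℕ) (γ : ℝ)
    (hγ : γ ≥ 2 + 1 / Real.sqrt ((F : ℝ) + 1))
    (n : ℕ → ℕ) (hn1 : n 1 = F + 1)
    (hrec : ∀ b ≥ 1, n (b + 1) = n b + ⌈γ * Real.sqrt ((n b : ℝ))⌉₊) :
    ∀ b : ℕ, 1 ≤ b → (b : ℝ) ≤ Real.sqrt ((n b : ℝ)) := by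
  have hF : 0 < √((F : ℝ) + 1) := sqrt_pos.mpr (by positivity)
  have hgap : ∀ b ≥ 1, 1 ≤ (γ - 2) * √(n b : ℝ) := fun b hb => by
    have hmono : √((F : ℝ) + 1) ≤ √(n b : ℝ) := by
      apply sqrt_le_sqrt
      exact_mod_cast hn1 ▸ apply_le_apply_of_succ_eq_add hrec hb
    calc (1 : ℝ) = 1 / √((F : ℝ) + 1) * √((F : ℝ) + 1) := by field_simp
      _ ≤ (γ - 2) * √(n b : ℝ) := by
        have : 0 < 1 / √((F : ℝ) + 1) := by positivity
        gcongr <;> linarith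
  intro b hb
  induction b, hb using Nat.le_induction with
  | base => simp [hn1, one_le_sqrt]
  | succ b hb ih =>
    rw [hrec b hb]
    push_cast
    exact add_one_le_sqrt_add_ceil (by positivity) (by positivity) ih (hgap b hb)

theorem stmt_0 (F : ℕ) (hF : 2 ≤ F) (γ : ℝ)
    (hγ : γ ≥ 2 + 1 / Real.sqrt ((F : ℝ) + 1))
    (n : ℕ → ℕ) (hn1 : n 1 = F + 1)
    (hrec : ∀ b ≥ 1, n (b + 1) = n b + ⌈γ * Real.sqrt ((n b : ℝ))⌉₊) :
    ∀ b : ℕ, 1 ≤ b → (b : ℝ) ≤ Real.sqrt ((n b : ℝ)) :=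
  stmt_0_general F γ hγ n hn1 hrec
end

section
/- Let F ≥ 2 be a natural number and γ ≥ 2 + 1/√(F+1). Define n_1 = F + 1, Δ(j) = ⌈γ √(n_j)⌉, and n_{j+1} = n_j + Δ(j). Then for every j ≥ 2, Δ(j)/n_j ≤ Δ(j-1)/n_{j-1}, i.e., the ratio of the gap length to the current time is nonincreasing. -/
/-!
With `m = n_j`, `s = √m` and `d = Δ_j` we have `γ s ≤ d ≤ γ s + 1`, so
`√(n_{j+1}) = √(s² + d) ≤ s + (γ s + 1) / (2s)` and `Δ_{j+1} ≤ γ √(n_{j+1}) + 1`. Clearing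
denominators, `Δ_{j+1} · m ≤ γ s³ + γ² s² / 2 + γ s / 2 + s²` while `d (m + d) ≥ γ s³ + γ² s²`, and the
difference `γ² s² / 2 ≥ γ s / 2 + s²` amounts to `γ (γ s - 1) ≥ 2 s`, which follows from `γ s ≥ 2 s + 1`.
-/

lemma sqrt_sq_add_le {s x : ℝ} (hs : 0 < s) (hx : 0 ≤ x) :
    √(s ^ 2 + x) ≤ s + x / (2 * s) := by
  rw [Real.sqrt_le_iff]
  refine ⟨by positivity, ?_⟩
  have hsq : (s + x / (2 * s)) ^ 2 = s ^ 2 + x + (x / (2 * s)) ^ 2 := by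
    field_simp
    ring
  nlinarith [sq_nonneg (x / (2 * s))]

lemma ratio_next_le {s γ d : ℝ} (hs : 0 < s) (hγ : 2 + 1 / s ≤ γ)
    (hd_lb : γ * s ≤ d) (hd_ub : d ≤ γ * s + 1) :
    (γ * √(s ^ 2 + d) + 1) / (s ^ 2 + d) ≤ d / s ^ 2 := by
  have hγs : 2 * s + 1 ≤ γ * s := by
    have := mul_le_mul_of_nonneg_right hγ hs.le
    rwa [add_mul, one_div_mul_cancel hs.ne'] at this
  have hγ0 : 0 ≤ γ := by nlinarith
  have hd0 : 0 ≤ d := le_trans (by positivity) hd_lb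
  have ht : √(s ^ 2 + d) ≤ s + (γ * s + 1) / (2 * s) :=
    (sqrt_sq_add_le hs hd0).trans (by gcongr)
  rw [div_le_div_iff₀ (by positivity) (by positivity)]
  calc (γ * √(s ^ 2 + d) + 1) * s ^ 2
      ≤ (γ * (s + (γ * s + 1) / (2 * s)) + 1) * s ^ 2 := by gcongr
    _ = γ * s ^ 3 + γ ^ 2 * s ^ 2 / 2 + γ * s / 2 + s ^ 2 := by field_simp; ring
    _ ≤ γ * s ^ 3 + γ ^ 2 * s ^ 2 := by nlinarith [mul_le_mul_of_nonneg_left hγs hγ0]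
    _ ≤ d * (s ^ 2 + d) := by nlinarith [mul_le_mul hd_lb hd_lb (by positivity) hd0]

lemma ceil_ratio_next_le {m : ℕ} (hm : 0 < m) {γ : ℝ} (hγ : 2 + 1 / √m ≤ γ) :
    (⌈γ * √(m + ⌈γ * √m⌉₊ : ℕ)⌉₊ : ℝ) / (m + ⌈γ * √m⌉₊ : ℕ) ≤ (⌈γ * √m⌉₊ : ℝ) / m := by
  have hs : 0 < √(m : ℝ) := Real.sqrt_pos.mpr (by exact_mod_cast hm)
  have hγ0 : 0 ≤ γ := le_trans (by positivity) hγ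
  have hsq : (m : ℝ) = √(m : ℝ) ^ 2 := (Real.sq_sqrt (Nat.cast_nonneg m)).symm
  have hnext := ratio_next_le hs hγ (Nat.le_ceil _) (Nat.ceil_lt_add_one (by positivity)).le
  rw [← hsq] at hnext
  push_cast
  refine le_trans ?_ hnext
  gcongr
  exact (Nat.ceil_lt_add_one (by positivity)).le

lemma apply_one_le_of_succ_eq_add {n Δ : ℕ → ℕ} (hrec : ∀ j ≥ 1, n (j + 1) = n j + Δ j) :
    ∀ j ≥ 1, n 1 ≤ n j := by
  intro j hj
  induction j, hj using Nat.le_induction with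
  | base => rfl
  | succ j hj ih => rw [hrec j hj]; omega

theorem stmt_1_general (F : ℕ) (γ : ℝ)
    (hγ : γ ≥ 2 + 1 / Real.sqrt ((F : ℝ) + 1))
    (n Δ : ℕ → ℕ) (hn1 : n 1 = F + 1)
    (hΔ : ∀ j ≥ 1, Δ j = ⌈γ * Real.sqrt (n j)⌉₊)
    (hrec : ∀ j ≥ 1, n (j + 1) = n j + Δ j) :
    ∀ j ≥ 2, (Δ j : ℝ) / (n j : ℝ) ≤ (Δ (j - 1) : ℝ) / (n (j - 1) : ℝ) := by
  intro j hj
  obtain ⟨i, hi, rfl⟩ : ∃ i ≥ 1, j = i + 1 := ⟨j - 1, by omega, by omega⟩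
  rw [Nat.add_sub_cancel, hΔ (i + 1) (by omega), hrec i hi, hΔ i hi]
  have hni : F + 1 ≤ n i := hn1 ▸ apply_one_le_of_succ_eq_add hrec i hi
  refine ceil_ratio_next_le (by omega) (le_trans ?_ hγ)
  gcongr
  exact_mod_cast hni

theorem stmt_1 (F : ℕ) (hF : 2 ≤ F) (γ : ℝ)
    (hγ : γ ≥ 2 + 1 / Real.sqrt ((F : ℝ) + 1))
    (n Δ : ℕ → ℕ) (hn1 : n 1 = F + 1)
    (hΔ : ∀ j ≥ 1, Δ j = ⌈γ * Real.sqrt (n j)⌉₊)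
    (hrec : ∀ j ≥ 1, n (j + 1) = n j + Δ j) :
    ∀ j ≥ 2, (Δ j : ℝ) / (n j : ℝ) ≤ (Δ (j - 1) : ℝ) / (n (j - 1) : ℝ) :=
  stmt_1_general F γ hγ n Δ hn1 hΔ hrec
end

section
/- Let F ≥ 2, γ ≥ 2 + 1/√(F+1), and let n_{j-1} ≥ F+1 and Δ(j-1) ≥ 1 satisfy γ√(n_{j-1}) ≤ Δ(j-1) ≤ γ√(n_{j-1}) + 1. Then γ√(n_{j-1} + Δ(j-1)) ≤ Δ(j-1) + Δ(j-1)²/n_{j-1} − 1. -/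
/-!
Write `s = √n`. Since `γ s ≤ Δ`, also `γ² ≤ Δ² / n`, so the right-hand side is at least
`γ s + γ² - 1`. Squaring, `γ² (n + Δ) ≤ γ² (s² + γ s + 1)`, and this falls short of
`(γ s + γ² - 1)²` by `γ s (γ² - 2) + (γ⁴ - 3γ² + 1)`, which is nonnegative once `γ ≥ 2`.
-/

namespace Real

theorem sq_le_sq_div_of_mul_sqrt_le {γ n Δ : ℝ} (hγ : 0 ≤ γ) (hn : 0 < n)
    (h : γ * √n ≤ Δ) : γ ^ 2 ≤ Δ ^ 2 / n := by
  rw [le_div_iff₀ hn]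
  calc γ ^ 2 * n = (γ * √n) ^ 2 := by rw [mul_pow, sq_sqrt hn.le]
    _ ≤ Δ ^ 2 := pow_le_pow_left₀ (by positivity) h 2

theorem mul_sqrt_add_le_of_le_mul_sqrt_add_one {γ n Δ : ℝ} (hγ : 2 ≤ γ) (hn : 0 ≤ n)
    (hnΔ : 0 ≤ n + Δ) (h : Δ ≤ γ * √n + 1) :
    γ * √(n + Δ) ≤ γ * √n + γ ^ 2 - 1 := by
  have hs : 0 ≤ √n := sqrt_nonneg n
  have hsq : √n ^ 2 = n := sq_sqrt hn
  have hγΔ : γ ^ 2 * Δ ≤ γ ^ 2 * (γ * √n + 1) := mul_le_mul_of_nonneg_left h (sq_nonneg γ)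
  have hlin : 0 ≤ γ * √n * (γ ^ 2 - 2) := mul_nonneg (by positivity) (by nlinarith)
  have hconst : 0 ≤ γ ^ 4 - 3 * γ ^ 2 + 1 := by nlinarith [sq_nonneg (γ ^ 2 - 2)]
  rw [← pow_le_pow_iff_left₀ (by positivity) (by nlinarith) two_ne_zero,
    mul_pow, sq_sqrt hnΔ]
  nlinarith

end Real

theorem stmt_3_general (F : ℕ) (γ n Δ : ℝ)
    (hγ : γ ≥ 2 + 1 / Real.sqrt ((F : ℝ) + 1))
    (hn : n ≥ (F : ℝ) + 1)
    (hΔ1 : γ * Real.sqrt n ≤ Δ) (hΔ2 : Δ ≤ γ * Real.sqrt n + 1) :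
    γ * Real.sqrt (n + Δ) ≤ Δ + Δ ^ 2 / n - 1 := by
  have hn0 : 0 < n := by linarith [(F.cast_nonneg : (0 : ℝ) ≤ F)]
  have hγ2 : 2 ≤ γ := by
    linarith [one_div_nonneg.2 (Real.sqrt_nonneg ((F : ℝ) + 1))]
  have hΔ0 : 0 ≤ Δ := (by positivity : 0 ≤ γ * √n).trans hΔ1
  calc γ * √(n + Δ) ≤ γ * √n + γ ^ 2 - 1 :=
        Real.mul_sqrt_add_le_of_le_mul_sqrt_add_one hγ2 hn0.le (by linarith) hΔ2
    _ ≤ Δ + Δ ^ 2 / n - 1 := by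
        linarith [Real.sq_le_sq_div_of_mul_sqrt_le (by linarith) hn0 hΔ1]

theorem stmt_3 (F : ℕ) (hF : 2 ≤ F) (γ n Δ : ℝ)
    (hγ : γ ≥ 2 + 1 / Real.sqrt ((F : ℝ) + 1))
    (hn : n ≥ (F : ℝ) + 1)
    (hΔ1 : γ * Real.sqrt n ≤ Δ) (hΔ2 : Δ ≤ γ * Real.sqrt n + 1) :
    γ * Real.sqrt (n + Δ) ≤ Δ + Δ ^ 2 / n - 1 :=
  stmt_3_general F γ n Δ hγ hn hΔ1 hΔ2
end

section
/- Let F ≥ 2 be a natural number and let γ satisfy 2 + 1/√(F+1) ≤ γ ≤ (F² + F − 1)/√(F+1). Define n_1 = F + 1, Δ(j) = ⌈γ √(n_j)⌉, and n_{j+1} = n_j + Δ(j). Then for every b ≥ 1, ∑_{j=1}^{b} log(1 + Δ(j)/n_j) ≤ log(n_b). -/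
/-!
The sum telescopes: `1 + Δ j / n j = n (j + 1) / n j`, so it equals `log (n (b + 1) / n 1)`.
It therefore suffices that `n (b + 1) ≤ n 1 * n b`, i.e. `Δ b ≤ F * n b`. This follows from
`γ ≤ (F² + F) / √(F + 1) = F √(F + 1) ≤ F √(n b)`, since the sequence never drops below
`n 1 = F + 1`.
-/

open Finset Real

lemma nat_ceil_mul_sqrt_le {γ m : ℝ} {c N : ℕ} (hγ : γ ≤ c * √m) (hm : m ≤ N) :
    ⌈γ * √N⌉₊ ≤ c * N := by
  refine Nat.ceil_le.2 ?_
  push_cast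
  calc γ * √N ≤ c * √m * √N := by gcongr
    _ ≤ c * √N * √N := by gcongr
    _ = c * N := by rw [mul_assoc, mul_self_sqrt N.cast_nonneg]

lemma le_mul_sqrt_of_le_div_sqrt {γ : ℝ} {F : ℕ}
    (hγ : γ ≤ ((F : ℝ) ^ 2 + F - 1) / √((F : ℝ) + 1)) : γ ≤ F * √((F : ℝ) + 1) := by
  calc γ ≤ ((F : ℝ) ^ 2 + F - 1) / √((F : ℝ) + 1) := hγ
    _ ≤ ((F : ℝ) ^ 2 + F) / √((F : ℝ) + 1) := by gcongr; linarith
    _ = F * √((F : ℝ) + 1) := by rw [show (F : ℝ) ^ 2 + F = F * (F + 1) by ring, mul_div_assoc,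
      div_sqrt]

section Recurrence

variable {n Δ : ℕ → ℕ} (hrec : ∀ j ≥ 1, n (j + 1) = n j + Δ j)
include hrec

lemma le_of_add_recurrence {j : ℕ} (hj : 1 ≤ j) : n 1 ≤ n j :=
  monotoneOn_nat_Ici_of_le_succ (fun j hj ↦ (hrec j hj).symm ▸ Nat.le_add_right _ _)
    Set.self_mem_Ici hj hj

lemma sum_Icc_log_one_add_div_eq (hn1 : 0 < n 1) {b : ℕ} (hb : 1 ≤ b) :
    ∑ j ∈ Icc 1 b, log (1 + (Δ j : ℝ) / n j) = log (n (b + 1)) - log (n 1) := by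
  have hpos : ∀ i ≥ 1, (0 : ℝ) < n i := fun i hi ↦ by
    exact_mod_cast hn1.trans_le (le_of_add_recurrence hrec hi)
  rw [← sum_Icc_sub hb (fun j ↦ log (n j : ℝ))]
  refine sum_congr rfl fun j hj ↦ ?_
  have hj1 := (mem_Icc.1 hj).1
  rw [← log_div (hpos (j + 1) (by omega)).ne' (hpos j hj1).ne', hrec j hj1, Nat.cast_add,
    add_div, div_self (hpos j hj1).ne']

end Recurrence

theorem stmt_4_general (F : ℕ) (γ : ℝ)
    (hγu : γ ≤ ((F : ℝ) ^ 2 + (F : ℝ) - 1) / Real.sqrt ((F : ℝ) + 1))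
    (n Δ : ℕ → ℕ) (hn1 : n 1 = F + 1)
    (hΔ : ∀ j ≥ 1, Δ j = ⌈γ * Real.sqrt (n j)⌉₊)
    (hrec : ∀ j ≥ 1, n (j + 1) = n j + Δ j) :
    ∀ b ≥ 1, ∑ j ∈ Finset.Icc 1 b, Real.log (1 + (Δ j : ℝ) / (n j : ℝ))
      ≤ Real.log (n b : ℝ) := by
  intro b hb
  have hnb : n 1 ≤ n b := le_of_add_recurrence hrec hb
  have hΔb : Δ b ≤ F * n b := hΔ b hb ▸
    nat_ceil_mul_sqrt_le (le_mul_sqrt_of_le_div_sqrt hγu) (by rw [hn1] at hnb; exact_mod_cast hnb)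
  have hstep : n (b + 1) ≤ n 1 * n b := by rw [hrec b hb, hn1]; nlinarith
  have hpos : (0 : ℝ) < n 1 := by rw [hn1]; positivity
  have hbpos : (0 : ℝ) < n b := hpos.trans_le (by exact_mod_cast hnb)
  rw [sum_Icc_log_one_add_div_eq hrec (by omega) hb, sub_le_iff_le_add',
    ← log_mul hpos.ne' hbpos.ne']
  exact log_le_log (by rw [hrec b hb]; push_cast; positivity) (by exact_mod_cast hstep)

theorem stmt_4 (F : ℕ) (hF : 2 ≤ F) (γ : ℝ)
    (hγl : 2 + 1 / Real.sqrt ((F : ℝ) + 1) ≤ γ)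
    (hγu : γ ≤ ((F : ℝ) ^ 2 + (F : ℝ) - 1) / Real.sqrt ((F : ℝ) + 1))
    (n Δ : ℕ → ℕ) (hn1 : n 1 = F + 1)
    (hΔ : ∀ j ≥ 1, Δ j = ⌈γ * Real.sqrt (n j)⌉₊)
    (hrec : ∀ j ≥ 1, n (j + 1) = n j + Δ j) :
    ∀ b ≥ 1, ∑ j ∈ Finset.Icc 1 b, Real.log (1 + (Δ j : ℝ) / (n j : ℝ))
      ≤ Real.log (n b : ℝ) :=
  stmt_4_general F γ hγu n Δ hn1 hΔ hrec
end

section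
/- Let F ≥ 2 and γ ≥ 2 + 1/√(F+1), with n_1 = F+1, Δ(j) = ⌈γ√(n_j)⌉, n_{j+1} = n_j + Δ(j). Then for every b ≥ 2, ∑_{j=2}^{b} (n_j/n_{j-1} − 1) ≤ γ(1 + (1/2) log(n_b)) + π²/6. -/
/-!
The `j`-th term equals `Δ(j-1) / n(j-1) ≤ γ / √n(j-1) + 1 / n(j-1)`. Since `γ ≥ 2 + 1/√n₁` and
`n` is increasing, `Δ j ≥ 2j + 1`, so `j² ≤ n j` by induction; hence the `j`-th term is at most
`γ / (j-1) + 1 / (j-1)²`. Summing, the harmonic bound `H_m ≤ 1 + log m` and `ζ(2) = π²/6`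
finish the proof, with `log (b-1) ≤ log √(n b)`.
-/

open Finset Real

lemma sum_Icc_two_eq_sum_Icc_one {M : Type*} [AddCommMonoid M] (f : ℕ → M) (b : ℕ) :
    ∑ j ∈ Icc 2 b, f j = ∑ k ∈ Icc 1 (b - 1), f (k + 1) := by
  rcases b with _ | b
  · rfl
  · rw [← map_add_right_Icc 1 b 1, sum_map]; rfl

lemma sum_Icc_inv_le_one_add_log (m : ℕ) : ∑ k ∈ Icc 1 m, (k : ℝ)⁻¹ ≤ 1 + log m := by
  simpa [harmonic_eq_sum_Icc] using harmonic_le_one_add_log m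

lemma sum_Icc_one_div_sq_le_pi_sq_div_six (m : ℕ) :
    ∑ k ∈ Icc 1 m, 1 / (k : ℝ) ^ 2 ≤ π ^ 2 / 6 :=
  sum_le_hasSum _ (fun _ _ => by positivity) hasSum_zeta_two

lemma log_natCast_le_log_sqrt {m x : ℕ} (h : m ^ 2 ≤ x) : log m ≤ log √x := by
  rcases m.eq_zero_or_pos with rfl | hm
  · rw [Nat.cast_zero, log_zero, log_sqrt (Nat.cast_nonneg x)]
    have := log_natCast_nonneg x
    positivity
  · exact log_le_log (by positivity) ((le_sqrt' (by positivity)).2 (by exact_mod_cast h))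

lemma two_mul_add_one_le_mul_sqrt {γ m x k : ℝ} (hm : 0 < m) (hmx : m ≤ x) (hk : k ≤ √x)
    (hγ : 2 + 1 / √m ≤ γ) : 2 * k + 1 ≤ γ * √x := by
  have hx : 1 ≤ √x / √m := (one_le_div (sqrt_pos.2 hm)).2 (sqrt_le_sqrt hmx)
  calc 2 * k + 1 ≤ 2 * √x + √x / √m := by linarith
    _ = (2 + 1 / √m) * √x := by ring
    _ ≤ γ * √x := by gcongr

lemma add_div_self_sub_one_le {γ x d k : ℝ} (hγ : 0 ≤ γ) (hk : 0 < k) (hkx : k ≤ √x)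
    (hd : d ≤ γ * √x + 1) : (x + d) / x - 1 ≤ γ / k + 1 / k ^ 2 := by
  have hsx : 0 < √x := hk.trans_le hkx
  have hx : 0 < x := sqrt_pos.1 hsx
  calc (x + d) / x - 1 = d / x := by field_simp; ring
    _ ≤ (γ * √x + 1) / x := by gcongr
    _ = γ / √x + 1 / √x ^ 2 := by
      rw [sq_sqrt hx.le]; field_simp; linear_combination γ * mul_self_sqrt hx.le
    _ ≤ γ / k + 1 / k ^ 2 := by gcongr

section Recurrence

variable {γ : ℝ} {n Δ : ℕ → ℕ}

lemma le_of_recurrence (hrec : ∀ j ≥ 1, n (j + 1) = n j + Δ j) : ∀ j ≥ 1, n 1 ≤ n j := by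
  intro j hj
  induction j, hj using Nat.le_induction with
  | base => rfl
  | succ j hj ih => rw [hrec j hj]; omega

lemma sq_le_of_recurrence (hγ : 2 + 1 / √(n 1 : ℝ) ≤ γ) (hn1 : 1 ≤ n 1)
    (hΔ : ∀ j ≥ 1, γ * √(n j : ℝ) ≤ Δ j) (hrec : ∀ j ≥ 1, n (j + 1) = n j + Δ j) :
    ∀ j, j ^ 2 ≤ n j := by
  rintro (_ | j)
  · simp
  induction j with
  | zero => simpa using hn1
  | succ j ih =>
    have hj : (j + 1 : ℝ) ≤ √(n (j + 1)) :=
      (le_sqrt' (by positivity)).2 (by exact_mod_cast ih)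
    have hstep : 2 * (j + 1 : ℝ) + 1 ≤ Δ (j + 1) :=
      (two_mul_add_one_le_mul_sqrt (by positivity)
        (by exact_mod_cast le_of_recurrence hrec (j + 1) (by omega)) hj hγ).trans
        (hΔ _ (by omega))
    have : 2 * (j + 1) + 1 ≤ Δ (j + 1) := by exact_mod_cast hstep
    rw [hrec _ (by omega)]
    nlinarith

end Recurrence

theorem stmt_6_general (F : ℕ) (γ : ℝ)
    (hγ : γ ≥ 2 + 1 / Real.sqrt ((F : ℝ) + 1))
    (n Δ : ℕ → ℕ) (hn1 : n 1 = F + 1)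
    (hΔ : ∀ j ≥ 1, Δ j = ⌈γ * Real.sqrt (n j)⌉₊)
    (hrec : ∀ j ≥ 1, n (j + 1) = n j + Δ j)
    (b : ℕ) :
    ∑ j ∈ Finset.Icc 2 b, ((n j : ℝ) / (n (j - 1) : ℝ) - 1)
      ≤ γ * (1 + Real.log (Real.sqrt (n b : ℝ))) + Real.pi ^ 2 / 6 := by
  have hγ1 : 2 + 1 / √(n 1 : ℝ) ≤ γ := by rwa [hn1, Nat.cast_add_one]
  have hγ0 : 0 ≤ γ := le_trans (by positivity) hγ1
  have hsq : ∀ j, j ^ 2 ≤ n j := sq_le_of_recurrence hγ1 (by omega)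
    (fun j hj => (hΔ j hj).symm ▸ Nat.le_ceil _) hrec
  have hterm : ∀ k ∈ Icc 1 (b - 1),
      (n (k + 1) : ℝ) / n (k + 1 - 1) - 1 ≤ γ / k + 1 / (k : ℝ) ^ 2 := by
    intro k hk
    have hk1 : 1 ≤ k := (mem_Icc.1 hk).1
    rw [add_tsub_cancel_right, hrec k hk1, Nat.cast_add, hΔ k hk1]
    exact add_div_self_sub_one_le hγ0 (by positivity)
      ((le_sqrt' (by positivity)).2 (by exact_mod_cast hsq k))
      (Nat.ceil_lt_add_one (by positivity)).le
  rw [sum_Icc_two_eq_sum_Icc_one]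
  calc _ ≤ ∑ k ∈ Icc 1 (b - 1), (γ / k + 1 / (k : ℝ) ^ 2) := sum_le_sum hterm
    _ = γ * ∑ k ∈ Icc 1 (b - 1), (k : ℝ)⁻¹ + ∑ k ∈ Icc 1 (b - 1), 1 / (k : ℝ) ^ 2 := by
      simp only [sum_add_distrib, mul_sum, div_eq_mul_inv]
    _ ≤ γ * (1 + log (b - 1 : ℕ)) + π ^ 2 / 6 := by
      gcongr
      · exact sum_Icc_inv_le_one_add_log _
      · exact sum_Icc_one_div_sq_le_pi_sq_div_six _
    _ ≤ γ * (1 + log √(n b : ℝ)) + π ^ 2 / 6 := by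
      gcongr γ * (1 + ?_) + _
      exact log_natCast_le_log_sqrt ((Nat.pow_le_pow_left (b.sub_le 1) 2).trans (hsq b))

theorem stmt_6 (F : ℕ) (hF : 2 ≤ F) (γ : ℝ)
    (hγ : γ ≥ 2 + 1 / Real.sqrt ((F : ℝ) + 1))
    (n Δ : ℕ → ℕ) (hn1 : n 1 = F + 1)
    (hΔ : ∀ j ≥ 1, Δ j = ⌈γ * Real.sqrt (n j)⌉₊)
    (hrec : ∀ j ≥ 1, n (j + 1) = n j + Δ j)
    (b : ℕ) (hb : 2 ≤ b) :
    ∑ j ∈ Finset.Icc 2 b, ((n j : ℝ) / (n (j - 1) : ℝ) - 1)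
      ≤ γ * (1 + Real.log (Real.sqrt (n b : ℝ))) + Real.pi ^ 2 / 6 :=
  stmt_6_general F γ hγ n Δ hn1 hΔ hrec b
end

section
/- Let F ≥ 2 and γ ≥ 2 + 1/√(F+1), with n_1 = F+1, Δ(j) = ⌈γ√(n_j)⌉, n_{j+1} = n_j + Δ(j). Then K₁ := 2∑_{j=1}^{∞} Δ(j)/n_j² converges and satisfies K₁ ≤ π²/3 + 4.12·γ. -/
/-!
Since `γ ≥ 2 + 1/√(F+1)` and `n_j ≥ F + 1`, one step adds `Δ(j) ≥ γ√n_j ≥ 2√n_j + 1`, so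
`n_j ≥ j²` by induction. As `Δ(j) ≤ γ√n_j + 1 ≤ (γ + 1) n_j`, the `j`-th term is at most
`(2γ + 2)/j²`, and the series is bounded by `(2γ + 2) π²/6 = π²/3 + γ π²/3 ≤ π²/3 + 4.12 γ`.
-/

open Real

lemma two_mul_add_one_le_mul {c γ x j : ℝ} (hc : 0 < c) (hγ : 2 + 1 / c ≤ γ)
    (hcx : c ≤ x) (hjx : j ≤ x) : 2 * j + 1 ≤ γ * x := by
  have hx : 1 ≤ x / c := (one_le_div hc).mpr hcx
  calc 2 * j + 1 ≤ 2 * x + x / c := by linarith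
    _ = (2 + 1 / c) * x := by ring
    _ ≤ γ * x := by gcongr; linarith

lemma two_mul_div_sq_le {γ d m : ℝ} (hγ : 0 ≤ γ) (hm : 1 ≤ m) (hd : d ≤ γ * √m + 1) :
    2 * d / m ^ 2 ≤ (2 * γ + 2) / m := by
  have hsqrt : √m ≤ m := (Real.sqrt_le_left (by linarith)).mpr (by nlinarith)
  have hdm : d ≤ (γ + 1) * m := by nlinarith
  rw [div_le_div_iff₀ (by positivity) (by positivity)]
  nlinarith

lemma hasSum_one_div_succ_sq :
    HasSum (fun j : ℕ => (1 : ℝ) / ((j + 1 : ℕ) : ℝ) ^ 2) (π ^ 2 / 6) := by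
  simpa using (hasSum_nat_add_iff' 1).mpr hasSum_zeta_two

lemma summable_and_tsum_le_of_le_div_succ_sq {f : ℕ → ℝ} {C : ℝ} (hf0 : ∀ j, 0 ≤ f j)
    (hf : ∀ j, f j ≤ C * (1 / ((j + 1 : ℕ) : ℝ) ^ 2)) :
    Summable f ∧ ∑' j, f j ≤ C * (π ^ 2 / 6) := by
  have hg := hasSum_one_div_succ_sq.mul_left C
  have hsum : Summable f := .of_nonneg_of_le hf0 hf hg.summable
  exact ⟨hsum, hg.tsum_eq ▸ hsum.tsum_le_tsum hf hg.summable⟩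

section Sequence

variable {F : ℕ} {γ : ℝ} {n Δ : ℕ → ℕ} (hn1 : n 1 = F + 1)
  (hΔ : ∀ j ≥ 1, Δ j = ⌈γ * √(n j)⌉₊) (hrec : ∀ j ≥ 1, n (j + 1) = n j + Δ j)

include hn1 hrec in
lemma succ_le_seq {j : ℕ} (hj : 1 ≤ j) : F + 1 ≤ n j := by
  induction j, hj using Nat.le_induction with
  | base => exact hn1.ge
  | succ k hk ih => rw [hrec k hk]; omega

include hn1 hΔ hrec in
lemma sq_le_seq (hγ : 2 + 1 / √((F : ℝ) + 1) ≤ γ) {j : ℕ} (hj : 1 ≤ j) : j ^ 2 ≤ n j := by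
  induction j, hj using Nat.le_induction with
  | base => rw [hn1]; omega
  | succ k hk ih =>
    have hsqrt_k : (k : ℝ) ≤ √(n k) :=
      Real.le_sqrt_of_sq_le (by exact_mod_cast ih)
    have hsqrt_F : √((F : ℝ) + 1) ≤ √(n k) :=
      Real.sqrt_le_sqrt (by exact_mod_cast succ_le_seq hn1 hrec hk)
    have hstep : 2 * k + 1 ≤ Δ k := by
      rw [hΔ k hk]
      exact_mod_cast (two_mul_add_one_le_mul (by positivity) hγ hsqrt_F hsqrt_k).trans
        (Nat.le_ceil _)
    rw [hrec k hk]
    nlinarith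

end Sequence

theorem stmt_12_general (F : ℕ) (γ : ℝ)
    (hγ : γ ≥ 2 + 1 / Real.sqrt ((F : ℝ) + 1))
    (n Δ : ℕ → ℕ) (hn1 : n 1 = F + 1)
    (hΔ : ∀ j ≥ 1, Δ j = ⌈γ * Real.sqrt (n j)⌉₊)
    (hrec : ∀ j ≥ 1, n (j + 1) = n j + Δ j) :
    Summable (fun j : ℕ => 2 * (Δ (j + 1) : ℝ) / (n (j + 1) : ℝ) ^ 2) ∧
    ∑' j : ℕ, 2 * (Δ (j + 1) : ℝ) / (n (j + 1) : ℝ) ^ 2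
      ≤ Real.pi ^ 2 / 3 + 4.12 * γ := by
  have hγ0 : 0 ≤ γ := by linarith [(by positivity : 0 ≤ 1 / √((F : ℝ) + 1))]
  have hterm (j : ℕ) : 2 * (Δ (j + 1) : ℝ) / (n (j + 1) : ℝ) ^ 2
      ≤ (2 * γ + 2) * (1 / ((j + 1 : ℕ) : ℝ) ^ 2) := by
    have hsq : ((j + 1 : ℕ) : ℝ) ^ 2 ≤ n (j + 1) := by
      exact_mod_cast sq_le_seq hn1 hΔ hrec hγ (Nat.le_add_left 1 j)
    have hm : (1 : ℝ) ≤ n (j + 1) := le_trans (one_le_pow₀ (by simp)) hsq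
    have hd : (Δ (j + 1) : ℝ) ≤ γ * √(n (j + 1)) + 1 := by
      rw [hΔ (j + 1) (Nat.le_add_left 1 j)]
      exact (Nat.ceil_lt_add_one (by positivity)).le
    calc _ ≤ (2 * γ + 2) / n (j + 1) := two_mul_div_sq_le hγ0 hm hd
      _ ≤ (2 * γ + 2) / ((j + 1 : ℕ) : ℝ) ^ 2 := by gcongr
      _ = _ := by ring
  obtain ⟨hsum, hle⟩ := summable_and_tsum_le_of_le_div_succ_sq (fun j => by positivity) hterm
  refine ⟨hsum, hle.trans ?_⟩
  have hpi : π ^ 2 ≤ 10 := by nlinarith [Real.pi_lt_d2, Real.pi_pos]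
  nlinarith [mul_le_mul_of_nonneg_left hpi hγ0]

theorem stmt_12 (F : ℕ) (hF : 2 ≤ F) (γ : ℝ)
    (hγ : γ ≥ 2 + 1 / Real.sqrt ((F : ℝ) + 1))
    (n Δ : ℕ → ℕ) (hn1 : n 1 = F + 1)
    (hΔ : ∀ j ≥ 1, Δ j = ⌈γ * Real.sqrt (n j)⌉₊)
    (hrec : ∀ j ≥ 1, n (j + 1) = n j + Δ j) :
    Summable (fun j : ℕ => 2 * (Δ (j + 1) : ℝ) / (n (j + 1) : ℝ) ^ 2) ∧
    ∑' j : ℕ, 2 * (Δ (j + 1) : ℝ) / (n (j + 1) : ℝ) ^ 2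
      ≤ Real.pi ^ 2 / 3 + 4.12 * γ :=
  stmt_12_general F γ hγ n Δ hn1 hΔ hrec
end

section
/- If a ≥ 0 and a real number Δ satisfies c√n ≤ Δ ≤ c√n + 1 with c ≥ 2 and n ≥ 1, then Δ² ≥ c²n, 2Δ³/n ≥ 2c³√n − 6c² (a lower bound derived from the binomial expansion), and in particular Δ² + Δ⁴/n² − 2Δ²/n + 2Δ³/n − 2Δ + 1 ≥ c⁴ + 2c(c²−1)√n + c²(n−2) − 4c/√n − 2/n − 1. -/
/-!
The left-hand side is the perfect square `(Δ² / n + Δ - 1)²`, and its base is increasing in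
`Δ ≥ 0`. At `Δ = c √n` the base is `c² + c √n - 1 ≥ 0`, and the square there equals the
right-hand side plus `4c / √n + 2 / n + 2 ≥ 0`.
-/

open Real

lemma sq_div_add_sub_one_sq_eq (n Δ : ℝ) :
    Δ ^ 2 + Δ ^ 4 / n ^ 2 - 2 * Δ ^ 2 / n + 2 * Δ ^ 3 / n - 2 * Δ + 1
      = (Δ ^ 2 / n + Δ - 1) ^ 2 := by
  ring

lemma sq_div_add_sub_one_sq_le {n a b : ℝ} (hn : 0 ≤ n) (ha : 0 ≤ a) (hab : a ≤ b)
    (hbase : 0 ≤ a ^ 2 / n + a - 1) :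
    (a ^ 2 / n + a - 1) ^ 2 ≤ (b ^ 2 / n + b - 1) ^ 2 := by
  have hsq : a ^ 2 / n ≤ b ^ 2 / n := by gcongr
  exact pow_le_pow_left₀ hbase (by linarith) 2

lemma mul_sqrt_sq_div_add_sub_one {c n : ℝ} (hn : 0 < n) :
    (c * √n) ^ 2 / n + c * √n - 1 = c ^ 2 + c * √n - 1 := by
  rw [mul_pow, sq_sqrt hn.le, mul_div_cancel_right₀ _ hn.ne']

lemma sq_add_mul_sqrt_sub_one_eq {c n : ℝ} (hn : 0 ≤ n) :
    (c ^ 2 + c * √n - 1) ^ 2 = c ^ 4 + 2 * c * (c ^ 2 - 1) * √n + c ^ 2 * (n - 2) + 1 := by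
  linear_combination c ^ 2 * sq_sqrt hn

theorem stmt_13_general (c n Δ : ℝ) (hc : 2 ≤ c) (hn : 1 ≤ n)
    (hΔ1 : c * Real.sqrt n ≤ Δ) :
    Δ ^ 2 + Δ ^ 4 / n ^ 2 - 2 * Δ ^ 2 / n + 2 * Δ ^ 3 / n - 2 * Δ + 1
      ≥ c ^ 4 + 2 * c * (c ^ 2 - 1) * Real.sqrt n + c ^ 2 * (n - 2)
        - 4 * c / Real.sqrt n - 2 / n - 1 := by
  have hn0 : 0 < n := by linarith
  have hs1 : 1 ≤ √n := one_le_sqrt.mpr hn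
  have hbase : 0 ≤ (c * √n) ^ 2 / n + c * √n - 1 := by
    rw [mul_sqrt_sq_div_add_sub_one hn0]
    nlinarith
  have hmono := sq_div_add_sub_one_sq_le hn0.le (by positivity) hΔ1 hbase
  rw [mul_sqrt_sq_div_add_sub_one hn0, sq_add_mul_sqrt_sub_one_eq hn0.le] at hmono
  have hslack : 0 ≤ 4 * c / √n + 2 / n := by positivity
  rw [sq_div_add_sub_one_sq_eq]
  linarith

theorem stmt_13 (c n Δ : ℝ) (hc : 2 ≤ c) (hn : 1 ≤ n)
    (hΔ1 : c * Real.sqrt n ≤ Δ) (hΔ2 : Δ ≤ c * Real.sqrt n + 1) :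
    Δ ^ 2 + Δ ^ 4 / n ^ 2 - 2 * Δ ^ 2 / n + 2 * Δ ^ 3 / n - 2 * Δ + 1
      ≥ c ^ 4 + 2 * c * (c ^ 2 - 1) * Real.sqrt n + c ^ 2 * (n - 2)
        - 4 * c / Real.sqrt n - 2 / n - 1 :=
  stmt_13_general c n Δ hc hn hΔ1
end
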